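/- Let A ⊆ ℤ and n ∈ ℤ. If n ∈ S₋Mχ_A and n+1 ∈ S₊Mχ_A (i.e. n is a right boundary point of the concave set of Mχ_A), then Mχ_A(n) − Mχ_A(n+1) ≤ |2χ_A(n) − χ_A(n−1) − χ_A(n+1)|. -/
import Mathlib


open Classical

/-- Discrete noncentered average `A_{r,s}f(n) = (1/(r+s+1)) ∑_{j=-r}^{s} |f(n+j)|`. -/
noncomputable def avg (f : ℤ → ℝ) (r s : ℕ) (n : ℤ) : ℝ :=
  (1 / (r + s + 1 : ℝ)) * ∑ j ∈ Finset.Icc (-(r : ℤ)) (s : ℤ), |f (n + j)|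

/-- Discrete noncentered Hardy–Littlewood maximal function `Mf(n) = sup_{r,s∈ℕ} A_{r,s}f(n)`. -/
noncomputable def M (f : ℤ → ℝ) (n : ℤ) : ℝ :=
  ⨆ r : ℕ, ⨆ s : ℕ, avg f r s n

/-- Characteristic function of `A ⊆ ℤ`. -/
noncomputable def chi (A : Set ℤ) (n : ℤ) : ℝ := if n ∈ A then 1 else 0

/-- The set of convex points `S₊f`. -/
def Splus (f : ℤ → ℝ) : Set ℤ := {n : ℤ | 2 * f n ≤ f (n + 1) + f (n - 1)}

/-- The set of concave points `S₋f`. -/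
def Sminus (f : ℤ → ℝ) : Set ℤ := (Splus f)ᶜ

/-- The left boundary `∂ₗS₋f`. -/
def bdl (f : ℤ → ℝ) : Set ℤ := {n : ℤ | n ∈ Sminus f ∧ n - 1 ∈ Splus f}

/-- The right boundary `∂ᵣS₋f`. -/
def bdr (f : ℤ → ℝ) : Set ℤ := {n : ℤ | n ∈ Sminus f ∧ n + 1 ∈ Splus f}

noncomputable def sAbs (f : ℤ → ℝ) (a b : ℤ) : ℝ := ∑ m ∈ Finset.Icc a b, |f m|

lemma avg_eq_sAbs (f : ℤ → ℝ) (r s : ℕ) (n : ℤ) :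
    avg f r s n = (1 / (r + s + 1 : ℝ)) * sAbs f (n - r) (n + s) := by
  unfold avg sAbs
  congr 1
  rw [show n - (r:ℤ) = n + (-(r:ℤ)) by ring, ← Finset.map_add_left_Icc (-(r:ℤ)) (s:ℤ) n,
    Finset.sum_map]
  rfl

lemma sAbs_nonneg (f : ℤ → ℝ) (a b : ℤ) : 0 ≤ sAbs f a b :=
  Finset.sum_nonneg fun _ _ => abs_nonneg _

lemma sAbs_succ (f : ℤ → ℝ) (a b : ℤ) (h : a ≤ b + 1) :
    sAbs f a (b + 1) = sAbs f a b + |f (b + 1)| := by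
  unfold sAbs
  have hins : Finset.Icc a (b + 1) = insert (b + 1) (Finset.Icc a b) := by
    ext m; simp only [Finset.mem_Icc, Finset.mem_insert]; omega
  rw [hins, Finset.sum_insert (by simp [Finset.mem_Icc])]
  ring

lemma chi_nonneg (A : Set ℤ) (m : ℤ) : 0 ≤ chi A m := by
  unfold chi; split <;> norm_num

lemma chi_le_one (A : Set ℤ) (m : ℤ) : chi A m ≤ 1 := by
  unfold chi; split <;> norm_num

lemma abs_chi (A : Set ℤ) (m : ℤ) : |chi A m| = chi A m := abs_of_nonneg (chi_nonneg A m)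

lemma avg_chi_nonneg (A : Set ℤ) (r s : ℕ) (n : ℤ) : 0 ≤ avg (chi A) r s n := by
  unfold avg
  apply mul_nonneg (by positivity)
  exact Finset.sum_nonneg fun _ _ => abs_nonneg _

lemma avg_chi_le_one (A : Set ℤ) (r s : ℕ) (n : ℤ) : avg (chi A) r s n ≤ 1 := by
  unfold avg
  have hcard : (Finset.Icc (-(r:ℤ)) (s:ℤ)).card = r + s + 1 := by
    rw [Int.card_Icc]; omega
  have hsum : ∑ j ∈ Finset.Icc (-(r:ℤ)) (s:ℤ), |chi A (n + j)| ≤ ((r:ℝ) + s + 1) := by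
    calc ∑ j ∈ Finset.Icc (-(r:ℤ)) (s:ℤ), |chi A (n + j)|
        ≤ ∑ _j ∈ Finset.Icc (-(r:ℤ)) (s:ℤ), (1:ℝ) :=
          Finset.sum_le_sum fun j _ => by rw [abs_chi]; exact chi_le_one A _
      _ = ((r:ℝ) + s + 1) := by rw [Finset.sum_const, hcard]; push_cast; ring
  have hpos : (0:ℝ) < (r:ℝ) + s + 1 := by positivity
  rw [one_div, inv_mul_le_iff₀ hpos]
  linarith

lemma avg_le_M (A : Set ℤ) (r s : ℕ) (n : ℤ) : avg (chi A) r s n ≤ M (chi A) n := by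
  have h1 : BddAbove (Set.range fun s => avg (chi A) r s n) :=
    ⟨1, by rintro _ ⟨s, rfl⟩; exact avg_chi_le_one A r s n⟩
  have h2 : BddAbove (Set.range fun r => ⨆ s, avg (chi A) r s n) :=
    ⟨1, by rintro _ ⟨r, rfl⟩; exact ciSup_le fun s => avg_chi_le_one A r s n⟩
  exact le_trans (le_ciSup h1 s) (le_ciSup h2 r)

lemma M_le (A : Set ℤ) (n : ℤ) (c : ℝ) (h : ∀ r s, avg (chi A) r s n ≤ c) :
    M (chi A) n ≤ c :=
  ciSup_le fun r => ciSup_le fun s => h r s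

lemma M_nonneg (A : Set ℤ) (n : ℤ) : 0 ≤ M (chi A) n :=
  le_trans (avg_chi_nonneg A 0 0 n) (avg_le_M A 0 0 n)

lemma M_le_one (A : Set ℤ) (n : ℤ) : M (chi A) n ≤ 1 :=
  M_le A n 1 fun r s => avg_chi_le_one A r s n

lemma exists_avg_gt (A : Set ℤ) (n : ℤ) (c : ℝ) (h : c < M (chi A) n) :
    ∃ r s, c < avg (chi A) r s n := by
  by_contra hc
  push_neg at hc
  exact absurd (M_le A n c hc) (not_le.mpr h)

lemma avg_zero_zero (A : Set ℤ) (n : ℤ) : avg (chi A) 0 0 n = chi A n := by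
  unfold avg; simp [abs_chi]

lemma M_ge_chi (A : Set ℤ) (n : ℤ) : chi A n ≤ M (chi A) n :=
  (avg_zero_zero A n) ▸ avg_le_M A 0 0 n

theorem right_boundary_bound (A : Set ℤ) (n : ℤ)
    (h1 : n ∈ Sminus (M (chi A))) (h2 : n + 1 ∈ Splus (M (chi A))) :
    M (chi A) n - M (chi A) (n + 1) ≤ |2 * chi A n - chi A (n - 1) - chi A (n + 1)| := by
  by_cases hd : M (chi A) n ≤ M (chi A) (n + 1)
  · have := abs_nonneg (2 * chi A n - chi A (n - 1) - chi A (n + 1))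
    linarith
  push_neg at hd
  by_cases hA1 : (n + 1) ∈ A
  · have h' : chi A (n+1) = 1 := by unfold chi; rw [if_pos hA1]
    have : (1:ℝ) ≤ M (chi A) (n+1) := h' ▸ M_ge_chi A (n+1)
    linarith [M_le_one A n]
  by_cases hA0 : n ∈ A
  · have hrhs : (1:ℝ) ≤ |2 * chi A n - chi A (n - 1) - chi A (n + 1)| := by
      unfold chi
      rw [if_pos hA0, if_neg hA1]
      split
      · norm_num
      · norm_num
    linarith [M_le_one A n, M_nonneg A (n+1)]
  by_cases hAm : (n - 1) ∈ A
  · have hrhs : (1:ℝ) ≤ |2 * chi A n - chi A (n - 1) - chi A (n + 1)| := by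
      unfold chi
      rw [if_neg hA0, if_neg hA1, if_pos hAm]
      norm_num
    linarith [M_le_one A n, M_nonneg A (n+1)]
  -- hard case
  exfalso
  have hchi0 : chi A n = 0 := by unfold chi; rw [if_neg hA0]
  have hchi1 : chi A (n+1) = 0 := by unfold chi; rw [if_neg hA1]
  set lam := M (chi A) n with hlam
  set mu := M (chi A) (n+1) with hmu
  have hmunn : 0 ≤ mu := M_nonneg A (n+1)
  set d := lam - mu with hdef
  have hdpos : 0 < d := by simp only [hdef]; linarith
  have hlampos : 0 < lam := by linarith
  have hlt : mu + M (chi A) (n - 1) < 2 * lam := by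
    have h' : ¬ (2 * M (chi A) n ≤ M (chi A) (n+1) + M (chi A) (n-1)) := h1
    push_neg at h'; rw [← hlam, ← hmu] at h'; linarith
  set ε := min (d/2) (d^2/(4*lam)) with hεdef
  have hεpos : 0 < ε := lt_min (by linarith) (by positivity)
  have hε1 : ε ≤ d/2 := min_le_left _ _
  have hε2 : 4 * lam * ε ≤ d^2 := by
    have h := min_le_right (d/2) (d^2/(4*lam))
    rw [← hεdef, le_div_iff₀ (by positivity : (0:ℝ) < 4*lam)] at h
    linarith
  obtain ⟨r, s, hrs⟩ := exists_avg_gt A n (lam - ε) (by linarith)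
  rcases s with _ | s'
  · rcases r with _ | r'
    · rw [avg_zero_zero, hchi0] at hrs
      linarith
    · -- r = r' + 1, s = 0
      set a : ℤ := n - ((r' : ℤ) + 1) with ha
      set T := sAbs (chi A) a (n - 1) with hT
      have hTnn : 0 ≤ T := sAbs_nonneg _ _ _
      have hTn : sAbs (chi A) a n = T := by
        have h' : sAbs (chi A) a ((n-1) + 1) = sAbs (chi A) a (n-1) + |chi A ((n-1)+1)| :=
          sAbs_succ (chi A) a (n-1) (by omega)
        rw [show (n:ℤ) - 1 + 1 = n by ring] at h'
        rw [h', hchi0, abs_zero, add_zero, hT]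
      have hTn1 : sAbs (chi A) a (n + 1) = T := by
        rw [sAbs_succ (chi A) a n (by omega), hchi1, abs_zero, add_zero, hTn]
      set k : ℝ := (r' : ℝ) + 1 with hk
      have hk1 : (1:ℝ) ≤ k := by
        have : (0:ℝ) ≤ (r':ℝ) := Nat.cast_nonneg r'
        simp only [hk]; linarith
      have hkpos : (0:ℝ) < k := by linarith
      have hk2pos : (0:ℝ) < k + 2 := by linarith
      -- (lam - ε)(k+1) < T
      have hA' : (lam - ε) * (k + 1) < T := by
        rw [avg_eq_sAbs] at hrs
        push_cast at hrs
        rw [show (n:ℤ) + 0 = n by ring, show (n:ℤ) - ((r':ℤ) + 1) = a by rw [ha], hTn] at hrs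
        rw [show ((r':ℝ) + 1 + 0 + 1) = k + 1 by rw [hk]; ring, one_div, inv_mul_eq_div,
          lt_div_iff₀ (by linarith)] at hrs
        linarith
      -- T / k ≤ M (n-1)
      have hMm : T / k ≤ M (chi A) (n - 1) := by
        have h := avg_le_M A r' 0 (n - 1)
        rw [avg_eq_sAbs] at h
        push_cast at h
        rw [show (n:ℤ) - 1 + 0 = n - 1 by ring,
          show (n:ℤ) - 1 - (r':ℤ) = a by rw [ha]; ring, ← hT] at h
        rw [show ((r':ℝ) + 0 + 1) = k by rw [hk]; ring, one_div, inv_mul_eq_div] at h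
        exact h
      -- T / (k+2) ≤ mu
      have hMp : T / (k + 2) ≤ mu := by
        have h := avg_le_M A (r' + 2) 0 (n + 1)
        rw [avg_eq_sAbs] at h
        push_cast at h
        rw [show (n:ℤ) + 1 + 0 = n + 1 by ring,
          show (n:ℤ) + 1 - ((r':ℤ) + 2) = a by rw [ha]; ring, hTn1] at h
        rw [show ((r':ℝ) + 2 + 0 + 1) = k + 2 by rw [hk]; ring, one_div, inv_mul_eq_div] at h
        exact h
      have hdiv : T / k + T / (k + 2) < 2 * lam := by linarith
      have hB : T * (k + 2) + T * k < 2 * lam * (k * (k + 2)) := by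
        rw [div_add_div _ _ (ne_of_gt hkpos) (ne_of_gt hk2pos),
          div_lt_iff₀ (by positivity)] at hdiv
        linarith
      have hC : T ≤ mu * (k + 2) := by
        rw [div_le_iff₀ hk2pos] at hMp; linarith
      have hmueq : mu = lam - d := by rw [hdef]; ring
      clear_value lam mu d ε T k
      clear hrs hTn hTn1 hT hdiv hMm hMp hlt h1 h2 hlam hmu hdef hεdef ha hk hA1 hA0 hAm hchi0 hchi1 hd
      have hstep1 : lam < ε * (k + 1)^2 := by
        have h5 : (lam - ε) * (k + 1) * (k + 1) < T * (k + 1) :=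
          mul_lt_mul_of_pos_right hA' (by linarith)
        nlinarith [h5, hB]
      have h4ll : 4 * lam * lam < d^2 * (k + 1)^2 := by
        nlinarith [mul_lt_mul_of_pos_left hstep1 (by linarith : (0:ℝ) < 4 * lam),
          mul_le_mul_of_nonneg_right hε2 (sq_nonneg (k+1))]
      have hroot : 2 * lam < d * (k + 1) := by
        by_contra hcon
        push_neg at hcon
        have hnn : 0 ≤ d * (k + 1) := mul_nonneg hdpos.le (by linarith)
        have hsq := mul_self_le_mul_self hnn hcon
        nlinarith [hsq, h4ll]
      nlinarith [hC, hA', hroot, hdpos, hk1, hmueq,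
        mul_le_mul_of_nonneg_right hε1 (by linarith : (0:ℝ) ≤ k + 1)]
  · -- s = s' + 1 : shift interval to n+1
    have hshift : avg (chi A) r (s' + 1) n = avg (chi A) (r + 1) s' (n + 1) := by
      rw [avg_eq_sAbs, avg_eq_sAbs]
      rw [show (n:ℤ) + 1 - (((r + 1 : ℕ)) : ℤ) = n - r by push_cast; ring,
        show (n:ℤ) + 1 + (s':ℤ) = n + ((s' : ℕ) + 1 : ℕ) by push_cast; ring]
      congr 2
      push_cast
      ring
    rw [hshift] at hrs
    have hle := avg_le_M A (r+1) s' (n+1)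
    have : lam - ε < mu := by rw [hmu]; linarith
    linarith
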